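/- For all m ∈ ℕ and 2 ≤ r ≤ m−1 (with r ≥ 2 and m ≥ 3), the sum ∑_{i=2}^{m−1} (√2)^i equals (1+√2)·2^{m/2} − 2/(√2−1), and consequently R_t(2,m) ≤ (1 − 1/2^t)·2^m − (√(2^t−1)/2^t)·((1+√2)·2^{m/2} − 2/(√2−1)), where R_t(2,m) is the t-th generalized covering radius of RM(2,m). -/

import Mathlib

open Classical in
noncomputable def tWeight {ι F : Type*} [Fintype ι] [Zero F] {t : ℕ} (v : Fin t → ι → F) : ℕ :=
  (Finset.univ.filter fun j : ι => ∃ i, v i j ≠ (0 : F)).card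

noncomputable def genCovDist {ι F : Type*} [Fintype ι] [AddGroup F] {t : ℕ} (v c : Fin t → ι → F) : ℕ :=
  tWeight (v - c)

noncomputable def genCovRadius {ι F : Type*} [Fintype ι] [AddGroup F] (C : Set (ι → F)) (t : ℕ) : ℕ :=
  sInf {r : ℕ | ∀ v : Fin t → ι → F, ∃ c : Fin t → ι → F, (∀ i, c i ∈ C) ∧ genCovDist v c ≤ r}

def RM (r m : ℕ) : Set ((Fin m → ZMod 2) → ZMod 2) :=
  {f | ∃ p : MvPolynomial (Fin m) (ZMod 2), p.totalDegree ≤ r ∧ ∀ x, MvPolynomial.eval x p = f x}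

/-!
Writing a word of `RM(r+1, m+1)` as `(u | u + x₀ v)` with `u ∈ RM(r+1, m)` and `v ∈ RM(r, m)`
gives `R_t(r+1, m+1) ≤ R_t(r, m) + R_t(r+1, m)`, and `RM(r, m)` is everything for `m ≤ r`, so
`R_t(2, m) ≤ ∑_{i=2}^{m-1} R_t(1, i)`.

For first order codes, Parseval's identity for the characters `x ↦ (-1)^(u ⬝ x)` shows that on
any set `G` of points a word agrees with some affine function outside at most
`(|G| - √|G|) / 2` points. Covering `t` of the words first and the remaining one on the set `G`
where the others are already matched gives `R_{t+1} ≤ (2^m + R_t - √(2^m - R_t)) / 2`, and by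
induction on `t`, `R_t(1, m) ≤ (1 - 2^{-t}) 2^m - √(2^t - 1) 2^{m/2} / 2^t`. The resulting sum
over `i` is geometric.
-/

open Finset

lemma zmod_two_cases (a : ZMod 2) : a = 0 ∨ a = 1 := by decide +revert

lemma sum_zmod_two {M : Type*} [AddCommMonoid M] (f : ZMod 2 → M) : ∑ a, f a = f 0 + f 1 :=
  Fin.sum_univ_two f

noncomputable def signChar : AddChar (ZMod 2) ℝ where
  toFun a := if a = 0 then 1 else -1
  map_zero_eq_one' := if_pos rfl
  map_add_eq_mul' a b := by
    rcases zmod_two_cases a with rfl | rfl <;> rcases zmod_two_cases b with rfl | rfl <;>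
      simp [show (1 : ZMod 2) + 1 = 0 from rfl]

lemma signChar_add_eq_ite (a b : ZMod 2) : signChar (a + b) = if a = b then 1 else -1 := by
  rcases zmod_two_cases a with rfl | rfl <;> rcases zmod_two_cases b with rfl | rfl <;>
    simp [signChar, show (1 : ZMod 2) + 1 = 0 from rfl]

lemma signChar_sq (a : ZMod 2) : signChar a ^ 2 = 1 := by
  rw [sq, ← AddChar.map_add_eq_mul, CharTwo.add_self_eq_zero, AddChar.map_zero_eq_one]

lemma signChar_sum {ι : Type*} (s : Finset ι) (f : ι → ZMod 2) :
    signChar (∑ i ∈ s, f i) = ∏ i ∈ s, signChar (f i) :=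
  map_prod (AddChar.toMonoidHom signChar) (fun i => Multiplicative.ofAdd (f i)) s

lemma sum_signChar_mul (c : ZMod 2) : ∑ a, signChar (a * c) = if c = 0 then 2 else 0 := by
  rw [sum_zmod_two]
  rcases zmod_two_cases c with rfl | rfl <;> norm_num [signChar]

lemma sum_signChar_dotProduct {n : ℕ} (z : Fin n → ZMod 2) :
    ∑ u : Fin n → ZMod 2, signChar (u ⬝ᵥ z) = if z = 0 then 2 ^ n else 0 := by
  simp only [dotProduct, signChar_sum]
  rw [← Fintype.prod_sum (fun i (a : ZMod 2) => signChar (a * z i))]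
  simp [sum_signChar_mul, prod_ite_zero, funext_iff]

lemma sum_sq_sum_mul_signChar_dotProduct {n : ℕ} (G : Finset (Fin n → ZMod 2))
    (f : (Fin n → ZMod 2) → ℝ) :
    ∑ u : Fin n → ZMod 2, (∑ x ∈ G, f x * signChar (u ⬝ᵥ x)) ^ 2
      = 2 ^ n * ∑ x ∈ G, f x ^ 2 := by
  have hchar : ∀ u x y : Fin n → ZMod 2,
      signChar (u ⬝ᵥ x) * signChar (u ⬝ᵥ y) = signChar (u ⬝ᵥ (x - y)) := by
    intro u x y
    rw [dotProduct_sub, CharTwo.sub_eq_add, AddChar.map_add_eq_mul]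
  calc ∑ u : Fin n → ZMod 2, (∑ x ∈ G, f x * signChar (u ⬝ᵥ x)) ^ 2
      = ∑ x ∈ G, ∑ y ∈ G, f x * f y * ∑ u, signChar (u ⬝ᵥ (x - y)) := by
        simp_rw [sq, sum_mul_sum, mul_sum, ← hchar]
        rw [sum_comm]
        refine sum_congr rfl fun x _ => ?_
        rw [sum_comm]
        refine sum_congr rfl fun y _ => sum_congr rfl fun u _ => by ring
    _ = 2 ^ n * ∑ x ∈ G, f x ^ 2 := by
        simp_rw [sum_signChar_dotProduct, sub_eq_zero, mul_ite, mul_zero, sum_ite_eq, mul_sum]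
        refine sum_congr rfl fun x hx => ?_
        rw [if_pos hx]
        ring

lemma sum_signChar_add_eq {α : Type*} (G : Finset α) (w c : α → ZMod 2) :
    ∑ x ∈ G, signChar (w x + c x) = #G - 2 * #{x ∈ G | w x ≠ c x} := by
  simp_rw [signChar_add_eq_ite]
  rw [sum_ite, sum_const, sum_const,
    ← card_filter_add_card_filter_not (s := G) (fun x => w x = c x)]
  push_cast
  ring

open MvPolynomial in
lemma affine_mem_RM_one {n : ℕ} (u : Fin n → ZMod 2) (e : ZMod 2) :
    (fun x => u ⬝ᵥ x + e) ∈ RM 1 n := by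
  refine ⟨∑ j, C (u j) * X j + C e, ?_, fun x => by simp [dotProduct]⟩
  refine (totalDegree_add _ _).trans (max_le (totalDegree_finsetSum_le fun j _ => ?_) (by simp))
  exact (totalDegree_mul _ _).trans (by simp [totalDegree_X])

lemma exists_mem_RM_one_card_ne_le {n : ℕ} (G : Finset (Fin n → ZMod 2))
    (w : (Fin n → ZMod 2) → ZMod 2) :
    ∃ c ∈ RM 1 n, (#{x ∈ G | w x ≠ c x} : ℝ) ≤ (#G - √(#G)) / 2 := by
  set S : (Fin n → ZMod 2) → ℝ := fun u => ∑ x ∈ G, signChar (w x + u ⬝ᵥ x)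
  have hS : ∑ u, S u ^ 2 = 2 ^ n * #G := by
    simpa [S, AddChar.map_add_eq_mul, signChar_sq] using
      sum_sq_sum_mul_signChar_dotProduct G (fun x => signChar (w x))
  obtain ⟨u, -, hu⟩ : ∃ u ∈ univ, (#G : ℝ) ≤ S u ^ 2 := by
    refine exists_le_of_sum_le univ_nonempty ?_
    simp [hS]
  obtain ⟨e, he⟩ : ∃ e, √(#G) ≤ ∑ x ∈ G, signChar (w x + (u ⬝ᵥ x + e)) := by
    have hflip : ∑ x ∈ G, signChar (w x + (u ⬝ᵥ x + 1)) = -S u := by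
      simp [S, ← add_assoc, AddChar.map_add_eq_mul, signChar]
    have := Real.sqrt_le_sqrt hu
    rw [Real.sqrt_sq_eq_abs] at this
    rcases le_total 0 (S u) with h | h
    · exact ⟨0, by simpa [abs_of_nonneg h] using this⟩
    · exact ⟨1, by rw [hflip]; rwa [abs_of_nonpos h] at this⟩
  refine ⟨_, affine_mem_RM_one u e, ?_⟩
  rw [sum_signChar_add_eq] at he
  linarith

section CoveringRadius

variable {ι F : Type*} [Fintype ι] [AddGroup F]

lemma genCovDist_eq_card [DecidableEq F] {t : ℕ} (v c : Fin t → ι → F) :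
    genCovDist v c = #{j | ∃ i, v i j ≠ c i j} := by
  simp only [genCovDist, tWeight, Pi.sub_apply, sub_ne_zero]

lemma genCovDist_cons [DecidableEq F] {t : ℕ} (a b : ι → F) (v c : Fin t → ι → F) :
    genCovDist (Fin.cons a v : Fin (t + 1) → ι → F) (Fin.cons b c)
      = genCovDist v c + #{j | (∀ i, v i j = c i j) ∧ a j ≠ b j} := by
  classical
  rw [genCovDist_eq_card, genCovDist_eq_card, ← card_union_of_disjoint]
  · congr 1
    ext j
    by_cases h : ∀ i, v i j = c i j
    · simp [h, Fin.exists_fin_succ]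
    · rw [not_forall] at h
      simp [h, Fin.exists_fin_succ]
  · exact disjoint_filter.2 fun j _ ⟨i, hi⟩ h => hi (h.1 i)

lemma genCovDist_le_card {t : ℕ} (v c : Fin t → ι → F) :
    genCovDist v c ≤ Fintype.card ι := by
  classical
  exact (genCovDist_eq_card v c).trans_le (card_filter_le _ _)

lemma genCovDist_eq_sum_cons {α : Type*} [Fintype α] {n t : ℕ}
    (v c : Fin t → (Fin (n + 1) → α) → F) :
    genCovDist v c
      = ∑ b, genCovDist (fun i x => v i (Fin.cons b x)) (fun i x => c i (Fin.cons b x)) := by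
  classical
  simp only [genCovDist_eq_card, card_filter]
  rw [← Fintype.sum_prod_type',
    ← Fintype.sum_equiv (Fin.consEquiv fun _ => α) _ _ fun _ => rfl]
  rfl

lemma genCovRadius_zero (C : Set (ι → F)) : genCovRadius C 0 = 0 :=
  Nat.sInf_eq_zero.2 <| Or.inl fun v => ⟨v, finZeroElim, by simp [genCovDist, tWeight]⟩

lemma exists_genCovDist_le_genCovRadius {C : Set (ι → F)} (hC : C.Nonempty) {t : ℕ}
    (v : Fin t → ι → F) : ∃ c, (∀ i, c i ∈ C) ∧ genCovDist v c ≤ genCovRadius C t :=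
  Nat.sInf_mem (s := {r | ∀ v : Fin t → ι → F, ∃ c, (∀ i, c i ∈ C) ∧ genCovDist v c ≤ r})
    ⟨Fintype.card ι, fun _ => ⟨fun _ => hC.some, fun _ => hC.some_mem, genCovDist_le_card _ _⟩⟩ v

lemma genCovRadius_le_of_forall_exists {C : Set (ι → F)} {t : ℕ} {B : ℝ}
    (h : ∀ v : Fin t → ι → F, ∃ c, (∀ i, c i ∈ C) ∧ (genCovDist v c : ℝ) ≤ B) :
    (genCovRadius C t : ℝ) ≤ B := by
  obtain ⟨c, -, hc⟩ := h 0
  calc (genCovRadius C t : ℝ) ≤ ⌊B⌋₊ := by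
        refine Nat.cast_le.2 (Nat.sInf_le fun v => ?_)
        obtain ⟨c, hcC, hc⟩ := h v
        exact ⟨c, hcC, Nat.le_floor hc⟩
    _ ≤ B := Nat.floor_le ((Nat.cast_nonneg _).trans hc)

end CoveringRadius

lemma zero_mem_RM (r n : ℕ) : 0 ∈ RM r n := ⟨0, by simp, by simp⟩

lemma mem_RM_of_le {r n : ℕ} (h : n ≤ r) (f : (Fin n → ZMod 2) → ZMod 2) :
    f ∈ RM r n := by
  obtain ⟨p, hp, rfl⟩ := Submodule.mem_map.1
    ((MvPolynomial.map_restrict_dom_evalₗ (ZMod 2) (Fin n)).symm ▸ Submodule.mem_top (x := f))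
  refine ⟨p, (Finset.sup_le fun s hs => ?_).trans h, fun x => rfl⟩
  rw [Finsupp.sum_fintype _ _ fun _ => rfl]
  calc ∑ i, s i ≤ ∑ _i : Fin n, 1 :=
        sum_le_sum fun i _ => (MvPolynomial.mem_restrictDegree _ _ _).1 hp s hs i
    _ = n := by simp

open MvPolynomial in
lemma cons_mem_RM {r n : ℕ} {q l : (Fin n → ZMod 2) → ZMod 2} (hq : q ∈ RM (r + 1) n)
    (hl : l ∈ RM r n) :
    (fun z => q (Fin.tail z) + z 0 * l (Fin.tail z)) ∈ RM (r + 1) (n + 1) := by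
  obtain ⟨p, hp, hpq⟩ := hq
  obtain ⟨p', hp', hpl⟩ := hl
  refine ⟨rename Fin.succ p + X 0 * rename Fin.succ p', ?_, fun z => ?_⟩
  · refine (totalDegree_add _ _).trans (max_le ((totalDegree_rename_le _ _).trans hp) ?_)
    refine (totalDegree_mul _ _).trans ?_
    have := (totalDegree_rename_le Fin.succ p').trans hp'
    rw [totalDegree_X]
    omega
  · simp only [map_add, map_mul, eval_X, eval_rename, ← hpq, ← hpl]
    rfl

lemma genCovRadius_RM_of_le {r n : ℕ} (h : n ≤ r) (t : ℕ) : genCovRadius (RM r n) t = 0 :=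
  Nat.sInf_eq_zero.2 <| Or.inl fun v =>
    ⟨v, fun _ => mem_RM_of_le h _, by simp [genCovDist, tWeight]⟩

lemma genCovRadius_RM_succ_succ_le (r n t : ℕ) :
    genCovRadius (RM (r + 1) (n + 1)) t
      ≤ genCovRadius (RM r n) t + genCovRadius (RM (r + 1) n) t := by
  refine Nat.sInf_le fun v => ?_
  set v₀ := fun i x => v i (Fin.cons 0 x)
  set v₁ := fun i x => v i (Fin.cons 1 x)
  obtain ⟨q, hq, hqd⟩ := exists_genCovDist_le_genCovRadius ⟨0, zero_mem_RM (r + 1) n⟩ v₀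
  obtain ⟨l, hl, hld⟩ := exists_genCovDist_le_genCovRadius ⟨0, zero_mem_RM r n⟩ (v₁ - q)
  refine ⟨fun i z => q i (Fin.tail z) + z 0 * l i (Fin.tail z),
    fun i => cons_mem_RM (hq i) (hl i), ?_⟩
  have hv₁ : genCovDist v₁ (q + l) = genCovDist (v₁ - q) l := by
    simp only [genCovDist, sub_sub]
  rw [genCovDist_eq_sum_cons, sum_zmod_two]
  simp only [Fin.tail_cons, Fin.cons_zero, zero_mul, add_zero, one_mul]
  change genCovDist v₀ q + genCovDist v₁ (q + l) ≤ _
  omega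

lemma genCovRadius_RM_one_succ_le {n t : ℕ} {B : ℝ}
    (hB : (genCovRadius (RM 1 n) t : ℝ) ≤ B) :
    (genCovRadius (RM 1 n) (t + 1) : ℝ) ≤ (2 ^ n + B - √(2 ^ n - B)) / 2 := by
  refine genCovRadius_le_of_forall_exists fun v => ?_
  obtain ⟨c, hc, hcd⟩ := exists_genCovDist_le_genCovRadius ⟨0, zero_mem_RM 1 n⟩ (Fin.tail v)
  set G : Finset (Fin n → ZMod 2) := {x | ∀ i, Fin.tail v i x = c i x}
  obtain ⟨c₀, hc₀, hc₀G⟩ := exists_mem_RM_one_card_ne_le G (v 0)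
  refine ⟨Fin.cons c₀ c, Fin.cases hc₀ hc, ?_⟩
  have hG : (#G : ℝ) = 2 ^ n - genCovDist (Fin.tail v) c := by
    have := card_filter_add_card_filter_not (s := univ) (fun x => ∀ i, Fin.tail v i x = c i x)
    simp only [not_forall, card_univ, Fintype.card_fun, ZMod.card, Fintype.card_fin] at this
    rw [genCovDist_eq_card, eq_sub_iff_add_eq]
    exact_mod_cast this
  have hd : (genCovDist (Fin.tail v) c : ℝ) ≤ B := (Nat.cast_le.2 hcd).trans hB
  have hsqrt : √(2 ^ n - B) ≤ √(#G) := Real.sqrt_le_sqrt (by rw [hG]; linarith)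
  rw [← Fin.cons_self_tail v, genCovDist_cons, ← filter_filter]
  push_cast
  linarith

noncomputable def rmOneBound (t n : ℕ) : ℝ :=
  (1 - 1 / 2 ^ t) * 2 ^ n - √(2 ^ t - 1) / 2 ^ t * √2 ^ n

lemma le_rmOneBound_succ (t n : ℕ) :
    (2 ^ n + rmOneBound t n - √(2 ^ n - rmOneBound t n)) / 2 ≤ rmOneBound (t + 1) n := by
  set T : ℝ := 2 ^ t
  set s : ℝ := √2 ^ n
  set a := √(T - 1)
  set q := √T
  have hT : 1 ≤ T := one_le_pow₀ (by norm_num)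
  have hs2 : s ^ 2 = 2 ^ n := by rw [← pow_mul, mul_comm, pow_mul, Real.sq_sqrt zero_le_two]
  have ha2 : a ^ 2 = T - 1 := Real.sq_sqrt (by linarith)
  have hq2 : q ^ 2 = T := Real.sq_sqrt (by linarith)
  have hq : 0 < q := Real.sqrt_pos.2 (by linarith)
  have hs : 0 ≤ s := by positivity
  have ha : 0 ≤ a := Real.sqrt_nonneg _
  have hβ : rmOneBound t n = (1 - 1 / T) * s ^ 2 - a / T * s := by rw [hs2]; rfl
  -- `2 ^ n - rmOneBound t n = (s ^ 2 + a * s) / T ≥ (q * s / T) ^ 2`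
  have hroot : q * s / T ≤ √(2 ^ n - rmOneBound t n) := by
    refine Real.le_sqrt_of_sq_le ?_
    rw [hβ, ← hs2]
    field_simp
    nlinarith [mul_nonneg ha hs]
  have hsqrt_succ : √(2 * T - 1) ≤ a + q :=
    Real.sqrt_le_iff.2 ⟨by positivity, by nlinarith [mul_nonneg ha hq.le]⟩
  calc (2 ^ n + rmOneBound t n - √(2 ^ n - rmOneBound t n)) / 2
      ≤ (2 ^ n + rmOneBound t n - q * s / T) / 2 := by linarith
    _ = (1 - 1 / (2 * T)) * 2 ^ n - (a + q) / (2 * T) * s := by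
        rw [hβ, ← hs2]
        field_simp
        ring
    _ ≤ (1 - 1 / (2 * T)) * 2 ^ n - √(2 * T - 1) / (2 * T) * s := by gcongr
    _ = rmOneBound (t + 1) n := by rw [rmOneBound, pow_succ, mul_comm (2 ^ t : ℝ) 2]

lemma genCovRadius_RM_one_le (t n : ℕ) : (genCovRadius (RM 1 n) t : ℝ) ≤ rmOneBound t n := by
  induction t with
  | zero => simp [genCovRadius_zero, rmOneBound]
  | succ t ih => exact (genCovRadius_RM_one_succ_le ih).trans (le_rmOneBound_succ t n)

lemma genCovRadius_RM_succ_le_sum (r t : ℕ) {m : ℕ} (hm : r + 1 ≤ m) :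
    genCovRadius (RM (r + 1) m) t ≤ ∑ i ∈ Ico (r + 1) m, genCovRadius (RM r i) t := by
  induction m, hm using Nat.le_induction with
  | base => simp [genCovRadius_RM_of_le le_rfl]
  | succ m hm ih =>
    rw [sum_Ico_succ_top hm]
    have := genCovRadius_RM_succ_succ_le r m t
    omega

lemma sum_Ico_two_sqrt_two_pow {m : ℕ} (hm : 2 ≤ m) :
    ∑ i ∈ Ico 2 m, √2 ^ i = (1 + √2) * √2 ^ m - 2 / (√2 - 1) := by
  have h1 : 1 < √2 := by simpa using Real.sqrt_lt_sqrt zero_le_one one_lt_two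
  have h2 : √2 ^ 2 = 2 := Real.sq_sqrt zero_le_two
  rw [geom_sum_Ico h1.ne' hm, h2, eq_sub_iff_add_eq, ← add_div, sub_add_cancel,
    div_eq_iff (sub_ne_zero.2 h1.ne')]
  linear_combination (-√2 ^ m) * h2

/-- ∑_{i=2}^{m−1}(√2)^i = (1+√2)·2^{m/2} − 2/(√2−1), and consequently
R_t(2,m) ≤ (1 − 1/2^t)·2^m − (√(2^t−1)/2^t)·((1+√2)·2^{m/2} − 2/(√2−1)). -/
theorem stmt16 (m t : ℕ) (hm : 3 ≤ m) :
    (∑ i ∈ Finset.Icc 2 (m - 1), (Real.sqrt 2) ^ i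
        = (1 + Real.sqrt 2) * (2 : ℝ) ^ ((m : ℝ) / 2) - 2 / (Real.sqrt 2 - 1)) ∧
    (genCovRadius (RM 2 m) t : ℝ) ≤
      (1 - 1 / 2 ^ t) * 2 ^ m
        - (Real.sqrt (2 ^ t - 1) / 2 ^ t)
            * ((1 + Real.sqrt 2) * (2 : ℝ) ^ ((m : ℝ) / 2) - 2 / (Real.sqrt 2 - 1)) := by
  have hIcc : Icc 2 (m - 1) = Ico 2 m := by ext; simp; omega
  have hpow : (2 : ℝ) ^ ((m : ℝ) / 2) = √2 ^ m := by
    rw [Real.rpow_div_two_eq_sqrt _ zero_le_two, Real.rpow_natCast]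
  rw [hIcc, hpow, ← sum_Ico_two_sqrt_two_pow (by omega)]
  refine ⟨rfl, ?_⟩
  have h4 : 0 ≤ (1 - 1 / 2 ^ t : ℝ) * 4 := by
    have : (1 : ℝ) / 2 ^ t ≤ 1 := div_le_one_of_le₀ (one_le_pow₀ one_le_two) (by positivity)
    nlinarith
  calc (genCovRadius (RM 2 m) t : ℝ) ≤ ∑ i ∈ Ico 2 m, (genCovRadius (RM 1 i) t : ℝ) := by
        exact_mod_cast genCovRadius_RM_succ_le_sum 1 t (by omega)
    _ ≤ ∑ i ∈ Ico 2 m, rmOneBound t i := sum_le_sum fun i _ => genCovRadius_RM_one_le t i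
    _ = (1 - 1 / 2 ^ t) * (2 ^ m - 4) - √(2 ^ t - 1) / 2 ^ t * ∑ i ∈ Ico 2 m, √2 ^ i := by
        simp only [rmOneBound, sum_sub_distrib, ← mul_sum,
          geom_sum_Ico (by norm_num : (2 : ℝ) ≠ 1) (by omega : 2 ≤ m)]
        norm_num
    _ ≤ _ := by linarith
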